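/- arXiv:1103.4623 — 5 statements merged into one kernel-verified Lean document; each statement's English description precedes it below -/
import Mathlib

section
/- Let v₁, v₂ ∈ ℂ⁷ be vectors such that both 5-vectors v₁∧ω₀ and v₂∧ω₀ are decomposable in ⋀⁵ℂ⁷. Then v₁∧v₂∧ω₀ = 0 in ⋀⁶ℂ⁷. (Every secant line of the conic Q = { [v] : v∧ω₀ decomposable } is an element of the variety of ω₀-isotropic 2-planes Ĝ₂.) -/
open ExteriorAlgebra

noncomputable section

/-- The standard basis 1-vectors `eᵢ` of `⋀¹ℂ⁷` (indexed from 0, so `e 0 = e₁`, …, `e 6 = e₇`). -/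
def e (i : Fin 7) : ExteriorAlgebra ℂ (Fin 7 → ℂ) := ι ℂ (Pi.single i 1)

/-- The degenerate 4-form
`ω₀ = e₁∧e₂∧e₃∧e₇ + e₄∧e₅∧e₆∧e₇ + e₂∧e₃∧e₅∧e₆ + e₁∧e₃∧e₄∧e₆`. -/
def ω₀ : ExteriorAlgebra ℂ (Fin 7 → ℂ) :=
  e 0 * e 1 * e 2 * e 6 + e 3 * e 4 * e 5 * e 6 + e 1 * e 2 * e 4 * e 5 + e 0 * e 2 * e 3 * e 5

/-- The wedge product of a tuple of vectors, as an element of the exterior algebra. -/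
def wedge {n : ℕ} (w : Fin n → (Fin 7 → ℂ)) : ExteriorAlgebra ℂ (Fin 7 → ℂ) :=
  (List.ofFn fun i => ι ℂ (w i)).prod

/-!
If `W = w₀ ∧ ⋯ ∧ w₄` is decomposable, contracting `W` with any four covectors leaves a vector in
`span {wᵢ}`, whose wedge with `W` therefore vanishes (a Plücker relation). For `W = v ∧ ω₀`,
contracting suitable such 6-vectors down to scalars gives `±(v i)²` for `i = 0, 1, 3, 4`, so `v`
lies in `span {e 2, e 5, e 6}`. Every term of `ω₀` contains two of `e 2, e 5, e 6`, hence
`e i ∧ e j ∧ ω₀ = 0` for `i, j ∈ {2, 5, 6}`, and the theorem follows by bilinearity.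
-/

local infixl:70 "⌋" => CliffordAlgebra.contractLeft

namespace ExteriorAlgebra

variable {R M : Type*} [CommRing R] [AddCommGroup M] [Module R M]

theorem ιMulti_mul_ι_self {n : ℕ} (v : Fin n → M) (i : Fin n) :
    ιMulti R n v * ι R (v i) = 0 := by
  have hι : ι R (v i) = ιMulti R 1 ![v i] := by simp
  rw [hι, ιMulti_mul_ιMulti]
  refine ιMulti_eq_zero_of_not_inj fun hinj => ?_
  have hval := congrArg Fin.val (@hinj (Fin.castAdd 1 i) (Fin.natAdd n 0) (by simp))
  simp only [Fin.val_castAdd, Fin.val_natAdd] at hval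
  omega

theorem ιMulti_mem_pow {P : Submodule R (ExteriorAlgebra R M)} {n : ℕ} {v : Fin n → M}
    (hv : ∀ i, ι R (v i) ∈ P) : ιMulti R n v ∈ P ^ n := by
  induction n with
  | zero => simp
  | succ n ih =>
    rw [ιMulti_succ_apply, pow_succ']
    exact Submodule.mul_mem_mul (hv 0) (ih fun i => hv i.succ)

theorem contractLeft_mem_pow_mul_top {P : Submodule R (ExteriorAlgebra R M)}
    (hP : P ≤ LinearMap.range (ι R)) (d : Module.Dual R M) {j : ℕ} {a : ExteriorAlgebra R M}
    (ha : a ∈ P ^ (j + 1) * ⊤) : d⌋a ∈ P ^ j * ⊤ := by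
  induction j generalizing a with
  | zero => simp
  | succ j ih =>
    rw [pow_succ', mul_assoc] at ha
    refine Submodule.mul_induction_on ha (fun p hp b hb => ?_) fun x y hx hy => ?_
    · obtain ⟨u, rfl⟩ := hP hp
      rw [CliffordAlgebra.contractLeft_ι_mul]
      refine sub_mem (Submodule.smul_mem _ _ hb) ?_
      rw [pow_succ', mul_assoc]
      exact Submodule.mul_mem_mul hp (ih hb)
    · rw [map_add]
      exact add_mem hx hy

theorem foldr_contractLeft_mem_pow_mul_top {P : Submodule R (ExteriorAlgebra R M)}
    (hP : P ≤ LinearMap.range (ι R)) (ds : List (Module.Dual R M)) {j : ℕ}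
    {a : ExteriorAlgebra R M} (ha : a ∈ P ^ (j + ds.length) * ⊤) :
    ds.foldr (fun d b => d⌋b) a ∈ P ^ j * ⊤ := by
  induction ds generalizing j with
  | nil => simpa using ha
  | cons d ds ih =>
    refine contractLeft_mem_pow_mul_top hP d (ih ?_)
    rwa [List.length_cons, ← add_assoc, add_right_comm] at ha

theorem ιMulti_mul_eq_zero_of_mem {n : ℕ} {v : Fin n → M} {a : ExteriorAlgebra R M}
    (ha : a ∈ Submodule.span R (Set.range fun i => ι R (v i)) * ⊤) :
    ιMulti R n v * a = 0 := by
  have hker : Submodule.span R (Set.range fun i => ι R (v i)) ≤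
      LinearMap.ker (LinearMap.mulLeft R (ιMulti R n v)) := Submodule.span_le.mpr <| by
    rintro _ ⟨i, rfl⟩
    exact ιMulti_mul_ι_self v i
  refine Submodule.mul_induction_on ha (fun p hp b _ => ?_) fun x y hx hy => ?_
  · rw [← mul_assoc, show ιMulti R n v * p = 0 from hker hp, zero_mul]
  · rw [mul_add, hx, hy, add_zero]

theorem ιMulti_mul_foldr_contractLeft {n : ℕ} (v : Fin n → M) (ds : List (Module.Dual R M))
    (hds : ds.length < n) : ιMulti R n v * ds.foldr (fun d b => d⌋b) (ιMulti R n v) = 0 := by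
  set P := Submodule.span R (Set.range fun i => ι R (v i))
  have hP : P ≤ LinearMap.range (ι R) := Submodule.span_le.mpr <| by
    rintro _ ⟨i, rfl⟩
    exact ⟨v i, rfl⟩
  obtain ⟨k, rfl⟩ : ∃ k, n = k + 1 + ds.length := ⟨n - ds.length - 1, by omega⟩
  have hW : ιMulti R _ v ∈ P ^ (k + 1 + ds.length) * ⊤ := by
    rw [← mul_one (ιMulti R _ v)]
    exact Submodule.mul_mem_mul (ιMulti_mem_pow fun i => Submodule.subset_span ⟨i, rfl⟩) trivial
  refine ιMulti_mul_eq_zero_of_mem ?_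
  have hC := foldr_contractLeft_mem_pow_mul_top hP ds hW
  rw [pow_succ', mul_assoc] at hC
  exact mul_le_mul_right le_top P hC

end ExteriorAlgebra

local notation "δ" => LinearMap.proj (R := ℂ) (φ := fun _ : Fin 7 => ℂ)

theorem coord_eq_zero_of_ι_mul_ω₀_eq_wedge {v : Fin 7 → ℂ}
    (hv : ∃ w : Fin 5 → (Fin 7 → ℂ), ι ℂ v * ω₀ = wedge w) :
    v 0 = 0 ∧ v 1 = 0 ∧ v 3 = 0 ∧ v 4 = 0 := by
  obtain ⟨w, hw⟩ := hv
  have plucker (ds ds' : List (Module.Dual ℂ (Fin 7 → ℂ))) (hds : ds.length < 5) :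
      ds'.foldr (fun d b => d⌋b) (ι ℂ v * ω₀ * ds.foldr (fun d b => d⌋b) (ι ℂ v * ω₀)) = 0 := by
    rw [hw, wedge, ← ιMulti_apply, ιMulti_mul_foldr_contractLeft w ds hds]
    induction ds' <;> simp_all
  -- each of these contractions picks out the single monomial `±(v i)²` of the 6-vector
  have h0 := plucker [δ 0, δ 1, δ 4, δ 5] [δ 0, δ 2, δ 3, δ 4, δ 5, δ 6] (by simp)
  have h1 := plucker [δ 0, δ 1, δ 3, δ 5] [δ 1, δ 2, δ 3, δ 4, δ 5, δ 6] (by simp)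
  have h3 := plucker [δ 0, δ 1, δ 2, δ 3] [δ 1, δ 2, δ 3, δ 4, δ 5, δ 6] (by simp)
  have h4 := plucker [δ 0, δ 1, δ 2, δ 4] [δ 0, δ 2, δ 3, δ 4, δ 5, δ 6] (by simp)
  simp only [List.foldr_cons, List.foldr_nil, ω₀, e, mul_add, add_mul, mul_assoc] at h0 h1 h3 h4
  simp (disch := decide) only [CliffordAlgebra.contractLeft_ι_mul, CliffordAlgebra.contractLeft_ι,
    CliffordAlgebra.contractLeft_algebraMap, LinearMap.proj_apply, Pi.single_eq_same,
    Pi.single_eq_of_ne, map_add, map_sub, map_smul, map_neg, map_zero, smul_add, smul_sub,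
    smul_neg, smul_zero, zero_smul, one_smul, smul_smul, mul_add, mul_sub, mul_neg, mul_zero,
    mul_smul_comm, add_zero, zero_add, sub_zero, zero_sub, neg_zero, neg_neg, neg_add,
    neg_sub, sub_neg_eq_add] at h0 h1 h3 h4
  simp only [neg_eq_zero, map_one, Algebra.smul_def, mul_one, algebraMap_eq_zero_iff,
    mul_self_eq_zero] at h0 h1 h3 h4
  exact ⟨h0, h1, h3, h4⟩

theorem e_mul_six_eq_zero_of_not_nodup {a b c d f g : Fin 7}
    (h : ¬ [a, b, c, d, f, g].Nodup) : e a * (e b * (e c * (e d * (e f * e g)))) = 0 := by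
  have hf : ¬ Function.Injective ![a, b, c, d, f, g] := fun hinj => h (List.nodup_ofFn.mpr hinj)
  have := ιMulti_eq_zero_of_not_inj (R := ℂ) fun hinj =>
    hf (Function.Injective.of_comp (f := fun i : Fin 7 => (Pi.single i 1 : Fin 7 → ℂ)) hinj)
  simpa only [ιMulti_apply, List.ofFn_succ, List.ofFn_zero, List.prod_cons, List.prod_nil,
    mul_one, Function.comp_apply, Matrix.cons_val_zero, Matrix.cons_val_succ, e] using this

theorem e_mul_e_mul_ω₀ {i j : Fin 7} (hi : i ∈ ({2, 5, 6} : Finset (Fin 7)))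
    (hj : j ∈ ({2, 5, 6} : Finset (Fin 7))) : e i * e j * ω₀ = 0 := by
  simp only [Finset.mem_insert, Finset.mem_singleton] at hi hj
  rcases hi with rfl | rfl | rfl <;> rcases hj with rfl | rfl | rfl <;>
    simp (disch := decide) only [ω₀, mul_add, mul_assoc, e_mul_six_eq_zero_of_not_nodup,
      add_zero]

theorem ι_eq_sum_e {v : Fin 7 → ℂ} (hv : v 0 = 0 ∧ v 1 = 0 ∧ v 3 = 0 ∧ v 4 = 0) :
    ι ℂ v = ∑ i ∈ ({2, 5, 6} : Finset (Fin 7)), v i • e i := by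
  have hsum : v = ∑ i ∈ ({2, 5, 6} : Finset (Fin 7)), v i • Pi.single i 1 := by
    funext j
    fin_cases j <;> simp [hv.1, hv.2.1, hv.2.2.1, hv.2.2.2]
  conv_lhs => rw [hsum]
  simp only [map_sum, map_smul, e]

/-- If `v₁∧ω₀` and `v₂∧ω₀` are both decomposable 5-vectors, then `v₁∧v₂∧ω₀ = 0`:
every secant line of the conic `Q = { [v] : v∧ω₀ decomposable }` belongs to `Ĝ₂`. -/
theorem stmt_3 (v₁ v₂ : Fin 7 → ℂ)
    (h₁ : ∃ w : Fin 5 → (Fin 7 → ℂ), ι ℂ v₁ * ω₀ = wedge w)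
    (h₂ : ∃ w : Fin 5 → (Fin 7 → ℂ), ι ℂ v₂ * ω₀ = wedge w) :
    ι ℂ v₁ * ι ℂ v₂ * ω₀ = 0 := by
  rw [ι_eq_sum_e (coord_eq_zero_of_ι_mul_ω₀_eq_wedge h₁),
    ι_eq_sum_e (coord_eq_zero_of_ι_mul_ω₀_eq_wedge h₂), Finset.sum_mul, Finset.sum_mul]
  refine Finset.sum_eq_zero fun i hi => ?_
  rw [Finset.mul_sum, Finset.sum_mul]
  refine Finset.sum_eq_zero fun j hj => ?_
  rw [smul_mul_assoc, mul_smul_comm, smul_mul_assoc, smul_mul_assoc, e_mul_e_mul_ω₀ hi hj,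
    smul_zero, smul_zero]

end
end

section
/- For every nonzero vector v ∈ ℂ⁷, the 5-vector v∧ω₀ is nonzero in ⋀⁵ℂ⁷. -/
open ExteriorAlgebra

noncomputable section

set_option maxRecDepth 16000
set_option maxHeartbeats 3200000

/-- Coefficient-extracting alternating 5-form: restrict rows to columns `σ`, take det. -/
def F (σ : Fin 5 → Fin 7) : (Fin 7 → ℂ) [⋀^Fin 5]→ₗ[ℂ] ℂ :=
  Matrix.detRowAlternating.compLinearMap (LinearMap.funLeft ℂ ℂ σ)

/-- The induced linear functional on the exterior algebra (zero in degrees ≠ 5). -/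
def φ (σ : Fin 5 → Fin 7) : ExteriorAlgebra ℂ (Fin 7 → ℂ) →ₗ[ℂ] ℂ :=
  liftAlternating (Function.update (fun _ => 0) 5 (F σ))

lemma phi_apply (σ : Fin 5 → Fin 7) (w : Fin 5 → Fin 7 → ℂ) :
    φ σ (ι ℂ (w 0) * ι ℂ (w 1) * ι ℂ (w 2) * ι ℂ (w 3) * ι ℂ (w 4)) =
      (Matrix.of fun i j => w i (σ j)).det := by
  have h : ι ℂ (w 0) * ι ℂ (w 1) * ι ℂ (w 2) * ι ℂ (w 3) * ι ℂ (w 4) = ιMulti ℂ 5 w := by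
    simp only [ιMulti_apply, List.ofFn_succ, List.ofFn_zero, List.prod_cons, List.prod_nil,
      mul_one, mul_assoc]
    rfl
  rw [h, φ, liftAlternating_apply_ιMulti, Function.update_self, F,
    AlternatingMap.compLinearMap_apply]
  rfl

lemma phi_mono (σ : Fin 5 → Fin 7) (v : Fin 7 → ℂ) (a b c d : Fin 7) :
    φ σ (ι ℂ v * (e a * e b * e c * e d)) =
      (Matrix.of fun i j =>
        (![v, Pi.single a 1, Pi.single b 1, Pi.single c 1, Pi.single d 1] :
          Fin 5 → Fin 7 → ℂ) i (σ j)).det := by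
  have h := phi_apply σ ![v, Pi.single a 1, Pi.single b 1, Pi.single c 1, Pi.single d 1]
  simpa [e, mul_assoc] using h

lemma key (σ : Fin 5 → Fin 7) (v : Fin 7 → ℂ) (h : ι ℂ v * ω₀ = 0) :
    (Matrix.of fun i j => (![v, Pi.single 0 1, Pi.single 1 1, Pi.single 2 1, Pi.single 6 1] :
        Fin 5 → Fin 7 → ℂ) i (σ j)).det +
    (Matrix.of fun i j => (![v, Pi.single 3 1, Pi.single 4 1, Pi.single 5 1, Pi.single 6 1] :
        Fin 5 → Fin 7 → ℂ) i (σ j)).det +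
    (Matrix.of fun i j => (![v, Pi.single 1 1, Pi.single 2 1, Pi.single 4 1, Pi.single 5 1] :
        Fin 5 → Fin 7 → ℂ) i (σ j)).det +
    (Matrix.of fun i j => (![v, Pi.single 0 1, Pi.single 2 1, Pi.single 3 1, Pi.single 5 1] :
        Fin 5 → Fin 7 → ℂ) i (σ j)).det = 0 := by
  have h2 : φ σ (ι ℂ v * ω₀) = 0 := by rw [h]; simp
  rw [ω₀, mul_add, mul_add, mul_add, map_add, map_add, map_add,
    phi_mono, phi_mono, phi_mono, phi_mono] at h2
  exact h2

/-- For every nonzero vector `v ∈ ℂ⁷`, the 5-vector `v ∧ ω₀` is nonzero. -/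
theorem stmt_4 (v : Fin 7 → ℂ) (hv : v ≠ 0) : ι ℂ v * ω₀ ≠ 0 := by
  intro h
  apply hv
  funext i
  fin_cases i
  · have := key ![0,3,4,5,6] v h
    simp (config := { decide := true }) [Matrix.det_succ_row_zero, Fin.sum_univ_succ,
      Pi.single_apply, Fin.succAbove] at this
    simpa using this
  · have := key ![1,3,4,5,6] v h
    simp (config := { decide := true }) [Matrix.det_succ_row_zero, Fin.sum_univ_succ,
      Pi.single_apply, Fin.succAbove] at this
    simpa using this
  · have := key ![2,3,4,5,6] v h
    simp (config := { decide := true }) [Matrix.det_succ_row_zero, Fin.sum_univ_succ,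
      Pi.single_apply, Fin.succAbove] at this
    simpa using this
  · have := key ![1,2,3,4,5] v h
    simp (config := { decide := true }) [Matrix.det_succ_row_zero, Fin.sum_univ_succ,
      Pi.single_apply, Fin.succAbove] at this
    simpa using this
  · have := key ![0,2,3,4,5] v h
    simp (config := { decide := true }) [Matrix.det_succ_row_zero, Fin.sum_univ_succ,
      Pi.single_apply, Fin.succAbove] at this
    simpa using this
  · have := key ![0,1,2,5,6] v h
    simp (config := { decide := true }) [Matrix.det_succ_row_zero, Fin.sum_univ_succ,
      Pi.single_apply, Fin.succAbove] at this
    simpa using this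
  · have := key ![1,2,4,5,6] v h
    simp (config := { decide := true }) [Matrix.det_succ_row_zero, Fin.sum_univ_succ,
      Pi.single_apply, Fin.succAbove] at this
    simpa using this

end
end

section
/- The linear map ⋀²ℂ⁷ → ⋀⁶ℂ⁷ given by w ↦ w∧ω₀ is surjective; equivalently, its kernel { w ∈ ⋀²ℂ⁷ : w∧ω₀ = 0 } has dimension 14. (Thus the variety Ĝ₂ of ω₀-isotropic 2-planes has linear span a ℙ¹³ inside the Plücker space ℙ(⋀²ℂ⁷).) -/
/-!
The map `w ↦ w ∧ ω₀` sends `⋀²` into `⋀⁶` for degree reasons. For each `k`, a suitable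
`e_i ∧ e_j` annihilates three of the four terms of `ω₀`, and the fourth completes it to the
basis 6-vector omitting `e_k`. Hence all seven basis vectors of `⋀⁶ℂ⁷` lie in the image, and
rank–nullity gives a kernel of dimension `21 - 7 = 14`.
-/

open ExteriorAlgebra

noncomputable section

theorem Set.powersetCard.exists_ofFinEmbEquiv_symm_eq_succAbove {n : ℕ}
    (s : powersetCard (Fin (n + 1)) n) :
    ∃ k, ⇑(ofFinEmbEquiv.symm s) = Fin.succAbove k := by
  obtain ⟨t, ht⟩ := s
  have hcard : tᶜ.card = 1 := by
    rw [Finset.card_compl, mem_iff.mp ht]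
    simp
  obtain ⟨k, hk⟩ := Finset.card_eq_one.mp hcard
  obtain rfl : t = {k}ᶜ := by rw [← hk, compl_compl]
  exact ⟨k, funext fun j =>
    Finset.orderEmbOfFin_compl_singleton_apply (mem_iff.mp ht) j⟩

lemma e_mem_exteriorPower_one (i : Fin 7) : e i ∈ ⋀[ℂ]^1 (Fin 7 → ℂ) := by
  unfold e
  simpa only [exteriorPower, pow_one] using LinearMap.mem_range_self _ _

lemma e_mul_e_mem_exteriorPower_two (i j : Fin 7) : e i * e j ∈ ⋀[ℂ]^2 (Fin 7 → ℂ) :=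
  SetLike.mul_mem_graded (e_mem_exteriorPower_one i) (e_mem_exteriorPower_one j)

lemma ω₀_mem_exteriorPower_four : ω₀ ∈ ⋀[ℂ]^4 (Fin 7 → ℂ) := by
  have h (i j k l : Fin 7) : e i * e j * e k * e l ∈ ⋀[ℂ]^4 (Fin 7 → ℂ) :=
    SetLike.mul_mem_graded (SetLike.mul_mem_graded (e_mul_e_mem_exteriorPower_two i j)
      (e_mem_exteriorPower_one k)) (e_mem_exteriorPower_one l)
  exact add_mem (add_mem (add_mem (h 0 1 2 6) (h 3 4 5 6)) (h 1 2 4 5)) (h 0 2 3 5)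

lemma e_mul_self (i : Fin 7) : e i * e i = 0 :=
  ι_sq_zero _

lemma e_mul_self_mul (i : Fin 7) (x : ExteriorAlgebra ℂ (Fin 7 → ℂ)) : e i * (e i * x) = 0 := by
  rw [← mul_assoc, e_mul_self, zero_mul]

lemma e_mul_e_mul_comm (i j : Fin 7) (x : ExteriorAlgebra ℂ (Fin 7 → ℂ)) :
    e i * (e j * x) = -(e j * (e i * x)) := by
  rw [← mul_assoc, ← mul_assoc, eq_neg_iff_add_eq_zero, ← add_mul,
    show e i * e j + e j * e i = 0 from ι_add_mul_swap _ _, zero_mul]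

lemma ιMulti_basisFun_comp (v : Fin 6 → Fin 7) :
    ιMulti ℂ 6 (Pi.basisFun ℂ (Fin 7) ∘ v) =
      e (v 0) * (e (v 1) * (e (v 2) * (e (v 3) * (e (v 4) * e (v 5))))) := by
  rw [ιMulti_apply]
  simp only [List.ofFn_succ, List.ofFn_zero, List.prod_cons, List.prod_nil, mul_one,
    Function.comp_apply, Pi.basisFun_apply]
  rfl

def complementPair : Fin 7 → Fin 7 × Fin 7 :=
  ![(1, 2), (0, 2), (0, 1), (4, 5), (3, 5), (3, 4), (0, 3)]

lemma e_mul_e_mul_ω₀_complementPair (k : Fin 7) :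
    e (complementPair k).1 * e (complementPair k).2 * ω₀ =
      ιMulti ℂ 6 (Pi.basisFun ℂ (Fin 7) ∘ k.succAbove) := by
  -- the order hypothesis lets `simp` sort the factors instead of looping
  have sort (i j : Fin 7) (_ : j < i) (x : ExteriorAlgebra ℂ (Fin 7 → ℂ)) :
      e i * (e j * x) = -(e j * (e i * x)) :=
    e_mul_e_mul_comm i j x
  rw [ιMulti_basisFun_comp]
  fin_cases k <;>
    simp +decide [complementPair, Fin.succAbove, ω₀, mul_add, mul_assoc, e_mul_self,
      e_mul_self_mul, sort]

lemma range_mul_ω₀_eq_exteriorPower_six :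
    LinearMap.range ((LinearMap.mulRight ℂ ω₀).comp (⋀[ℂ]^2 (Fin 7 → ℂ)).subtype)
      = ⋀[ℂ]^6 (Fin 7 → ℂ) := by
  apply le_antisymm
  · rintro _ ⟨⟨w, hw⟩, rfl⟩
    exact SetLike.mul_mem_graded hw ω₀_mem_exteriorPower_four
  · rw [← exteriorPower.ιMulti_family_span_fixedDegree_of_span ℂ (Pi.basisFun ℂ (Fin 7)).span_eq,
      Submodule.span_le]
    rintro _ ⟨s, rfl⟩
    obtain ⟨k, hk⟩ := Set.powersetCard.exists_ofFinEmbEquiv_symm_eq_succAbove s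
    refine ⟨⟨_, e_mul_e_mem_exteriorPower_two (complementPair k).1 (complementPair k).2⟩, ?_⟩
    simp only [LinearMap.comp_apply, Submodule.coe_subtype, LinearMap.mulRight_apply,
      ιMulti_family, hk]
    exact e_mul_e_mul_ω₀_complementPair k

lemma finrank_exteriorPower_fin_fun {R : Type*} [CommRing R] [Nontrivial R] (m n : ℕ) :
    Module.finrank R (⋀[R]^n (Fin m → R)) = m.choose n := by
  rw [exteriorPower.finrank_eq, Module.finrank_fin_fun]

/-- The linear map `⋀²ℂ⁷ → ⋀⁶ℂ⁷`, `w ↦ w∧ω₀`, is surjective onto `⋀⁶ℂ⁷` and its kernel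
has dimension 14: the span of `Ĝ₂` is a `ℙ¹³` inside `ℙ(⋀²ℂ⁷)`. -/
theorem stmt_9 :
    LinearMap.range ((LinearMap.mulRight ℂ ω₀).comp (⋀[ℂ]^2 (Fin 7 → ℂ)).subtype)
      = ⋀[ℂ]^6 (Fin 7 → ℂ) ∧
    Module.finrank ℂ
      (LinearMap.ker ((LinearMap.mulRight ℂ ω₀).comp (⋀[ℂ]^2 (Fin 7 → ℂ)).subtype)) = 14 := by
  refine ⟨range_mul_ω₀_eq_exteriorPower_six, ?_⟩
  have h := LinearMap.finrank_range_add_finrank_ker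
    ((LinearMap.mulRight ℂ ω₀).comp (⋀[ℂ]^2 (Fin 7 → ℂ)).subtype)
  rw [range_mul_ω₀_eq_exteriorPower_six, finrank_exteriorPower_fin_fun,
    finrank_exteriorPower_fin_fun] at h
  simp only [Nat.choose] at h
  omega

end
end

section
/- The linear map ⋀²ℂ⁷ → ⋀⁶ℂ⁷ given by w ↦ w∧ω is surjective; equivalently, its kernel { w ∈ ⋀²ℂ⁷ : w∧ω = 0 } has dimension 14. (Thus the adjoint variety G₂ of ω-isotropic 2-planes is cut out from the Grassmannian G(2,7) by seven hyperplanes and has linear span a ℙ¹³ inside ℙ(⋀²ℂ⁷).) -/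
/-!
Write `ê_k` for the wedge, in increasing order, of all `eᵢ` with `i ≠ k`; these seven 6-vectors
span `⋀⁶ℂ⁷`. For each `k` there is a pair `i < j` such that exactly one of the five monomials of
`ω` is disjoint from `{i, j}`, namely the one supported on the complement of `{i, j, k}`, and its
sign gives `eᵢ∧eⱼ∧ω = ê_k`. Hence `w ↦ w∧ω` maps `⋀²ℂ⁷` onto `⋀⁶ℂ⁷`, and rank–nullity gives a
kernel of dimension `21 - 7 = 14`.
-/

open ExteriorAlgebra

noncomputable section

/-- The non-degenerate 4-form `ω = ω₀ + e₁∧e₂∧e₄∧e₅`. -/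
def ω : ExteriorAlgebra ℂ (Fin 7 → ℂ) := ω₀ + e 0 * e 1 * e 3 * e 4

theorem Finset.exists_eq_compl_singleton_of_card_add_one {α : Type*} [Fintype α] [DecidableEq α]
    {s : Finset α} (hs : s.card + 1 = Fintype.card α) : ∃ a, s = {a}ᶜ := by
  obtain ⟨a, ha⟩ := Finset.card_eq_one.mp (by rw [Finset.card_compl]; omega : sᶜ.card = 1)
  exact ⟨a, by rw [← ha, compl_compl]⟩

namespace ExteriorAlgebra

variable {R M : Type*} [CommRing R] [AddCommGroup M] [Module R M]

theorem ι_mem_exteriorPower_one (m : M) : ι R m ∈ ⋀[R]^1 M := by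
  rw [exteriorPower, pow_one]
  exact LinearMap.mem_range_self _ m

theorem ι_mul_ι_eq_neg (x y : M) : ι R x * ι R y = -(ι R y * ι R x) :=
  eq_neg_of_add_eq_zero_left (ι_add_mul_swap x y)

theorem ι_mul_ι_mul_eq_neg (x y : M) (z : ExteriorAlgebra R M) :
    ι R x * (ι R y * z) = -(ι R y * (ι R x * z)) := by
  rw [← mul_assoc, ← mul_assoc, ι_mul_ι_eq_neg, neg_mul]

theorem ι_mul_ι_mul_self (x : M) (z : ExteriorAlgebra R M) : ι R x * (ι R x * z) = 0 := by
  rw [← mul_assoc, ι_sq_zero, zero_mul]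

theorem exteriorPower_eq_span_ιMulti_succAbove {n : ℕ} (b : Module.Basis (Fin (n + 1)) R M) :
    ⋀[R]^n M
      = Submodule.span R (Set.range fun k : Fin (n + 1) => ιMulti R n (b ∘ k.succAbove)) := by
  refine le_antisymm ?_ (Submodule.span_le.mpr ?_)
  · rw [← Submodule.map_subtype_top (⋀[R]^n M), ← (b.exteriorPower n).span_eq,
      Submodule.map_span, Submodule.span_le]
    rintro _ ⟨_, ⟨⟨s, hs⟩, rfl⟩, rfl⟩
    have hcard : s.card + 1 = Fintype.card (Fin (n + 1)) := by rw [Fintype.card_fin, hs]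
    obtain ⟨k, rfl⟩ := Finset.exists_eq_compl_singleton_of_card_add_one hcard
    refine Submodule.subset_span ⟨k, ?_⟩
    simp only [exteriorPower.coe_basis, exteriorPower.ιMulti_family, Submodule.subtype_apply,
      exteriorPower.ιMulti_apply_coe, Set.powersetCard.ofFinEmbEquiv_symm_apply,
      Finset.orderEmbOfFin_compl_singleton_eq_succAboveOrderEmb]
    rfl
  · rintro _ ⟨k, rfl⟩
    exact ιMulti_range R n ⟨_, rfl⟩

end ExteriorAlgebra

theorem ω_mem_exteriorPower_four : ω ∈ ⋀[ℂ]^4 (Fin 7 → ℂ) := by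
  have he (i : Fin 7) : e i ∈ ⋀[ℂ]^1 (Fin 7 → ℂ) := ι_mem_exteriorPower_one _
  have hmonomial (a b c d : Fin 7) : e a * e b * e c * e d ∈ ⋀[ℂ]^4 (Fin 7 → ℂ) :=
    SetLike.mul_mem_graded
      (SetLike.mul_mem_graded (SetLike.mul_mem_graded (he a) (he b)) (he c)) (he d)
  simp only [ω, ω₀]
  repeat' apply add_mem
  all_goals exact hmonomial _ _ _ _

theorem e_mul_e_mul_ω (k : Fin 7) :
    e (complementPair k).1 * e (complementPair k).2 * ω
      = ιMulti ℂ 6 (Pi.basisFun ℂ (Fin 7) ∘ k.succAbove) := by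
  -- the guard `j < i` orients the anticommutation rule, so that `simp` sorts every monomial
  have swap (i j : Fin 7) (_ : j < i) (z) : e i * (e j * z) = -(e j * (e i * z)) :=
    ι_mul_ι_mul_eq_neg _ _ z
  have swap_last (i j : Fin 7) (_ : j < i) : e i * e j = -(e j * e i) := ι_mul_ι_eq_neg _ _
  have sq (i : Fin 7) (z) : e i * (e i * z) = 0 := ι_mul_ι_mul_self _ z
  have sq_last (i : Fin 7) : e i * e i = 0 := ι_sq_zero _
  simp only [ιMulti_apply, List.ofFn_succ, List.ofFn_zero, List.prod_cons, List.prod_nil, mul_one,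
    Function.comp_apply, Pi.basisFun_apply, ← e.eq_def]
  fin_cases k <;>
    simp (disch := decide) [complementPair, Fin.succAbove, ω, ω₀, mul_add, mul_assoc, swap,
      swap_last, sq, sq_last]

theorem range_mulRight_ω_comp_subtype :
    LinearMap.range ((LinearMap.mulRight ℂ ω).comp (⋀[ℂ]^2 (Fin 7 → ℂ)).subtype)
      = ⋀[ℂ]^6 (Fin 7 → ℂ) := by
  refine le_antisymm ?_ ?_
  · rintro _ ⟨⟨w, hw⟩, rfl⟩
    exact SetLike.mul_mem_graded hw ω_mem_exteriorPower_four
  · rw [exteriorPower_eq_span_ιMulti_succAbove (Pi.basisFun ℂ (Fin 7)), Submodule.span_le]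
    rintro _ ⟨k, rfl⟩
    have hw : e (complementPair k).1 * e (complementPair k).2 ∈ ⋀[ℂ]^2 (Fin 7 → ℂ) :=
      SetLike.mul_mem_graded (ι_mem_exteriorPower_one _) (ι_mem_exteriorPower_one _)
    exact ⟨⟨_, hw⟩, e_mul_e_mul_ω k⟩

/-- The linear map `⋀²ℂ⁷ → ⋀⁶ℂ⁷`, `w ↦ w∧ω`, is surjective onto `⋀⁶ℂ⁷` and its kernel has
dimension 14: `G₂` is cut out of `G(2,7)` by seven hyperplanes and spans a `ℙ¹³`. -/
theorem stmt_10 :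
    LinearMap.range ((LinearMap.mulRight ℂ ω).comp (⋀[ℂ]^2 (Fin 7 → ℂ)).subtype)
      = ⋀[ℂ]^6 (Fin 7 → ℂ) ∧
    Module.finrank ℂ
      (LinearMap.ker ((LinearMap.mulRight ℂ ω).comp (⋀[ℂ]^2 (Fin 7 → ℂ)).subtype)) = 14 := by
  have rank_nullity := LinearMap.finrank_range_add_finrank_ker
    ((LinearMap.mulRight ℂ ω).comp (⋀[ℂ]^2 (Fin 7 → ℂ)).subtype)
  rw [range_mulRight_ω_comp_subtype, exteriorPower.finrank_eq, exteriorPower.finrank_eq,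
    Module.finrank_fin_fun] at rank_nullity
  refine ⟨range_mulRight_ω_comp_subtype, ?_⟩
  simp only [Nat.choose] at rank_nullity
  omega

end
end

section
/- For every t ∈ ℂ with t ≠ 0, there exists an invertible linear map g : ℂ⁷ → ℂ⁷ such that the induced map ⋀⁴g on ⋀⁴ℂ⁷ (acting by g on each factor of a wedge product) sends ω_t := ω₀ + t·e₁∧e₂∧e₄∧e₅ to ω = ω₀ + e₁∧e₂∧e₄∧e₅. (Hence for every t ≠ 0 the 4-form ω_t is non-degenerate and its variety of isotropic 2-planes is isomorphic to G₂, while at t = 0 the family degenerates to Ĝ₂.) -/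
open ExteriorAlgebra

noncomputable section

/-- For every `t ≠ 0` there is a linear automorphism `g` of `ℂ⁷` whose induced map on
`⋀⁴ℂ⁷` carries `ω_t = ω₀ + t·e₁∧e₂∧e₄∧e₅` to `ω = ω₀ + e₁∧e₂∧e₄∧e₅`: all the forms
`ω_t` with `t ≠ 0` are equivalent non-degenerate forms, degenerating to `ω₀` at `t = 0`. -/
theorem stmt_11 (t : ℂ) (ht : t ≠ 0) :
    ∃ g : (Fin 7 → ℂ) ≃ₗ[ℂ] (Fin 7 → ℂ),
      ExteriorAlgebra.map (g : (Fin 7 → ℂ) →ₗ[ℂ] (Fin 7 → ℂ))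
        (ω₀ + t • (e 0 * e 1 * e 3 * e 4)) = ω := by
  obtain ⟨u, hu⟩ := IsAlgClosed.exists_pow_nat_eq (k := ℂ) t⁻¹ (n := 4) (by norm_num)
  have hu0 : u ≠ 0 := by
    intro h
    apply inv_ne_zero ht
    rw [← hu, h]
    norm_num
  set d : Fin 7 → ℂ := fun i => if i.val = 2 ∨ i.val = 5 ∨ i.val = 6 then u⁻¹ else u with hd
  have hdne : ∀ i, d i ≠ 0 := by
    intro i
    simp only [hd]
    split_ifs
    · exact inv_ne_zero hu0
    · exact hu0
  refine ⟨LinearEquiv.piCongrRight fun i => LinearEquiv.smulOfNeZero ℂ ℂ (d i) (hdne i), ?_⟩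
  set g := (LinearEquiv.piCongrRight fun i =>
    LinearEquiv.smulOfNeZero ℂ ℂ (d i) (hdne i) : (Fin 7 → ℂ) ≃ₗ[ℂ] (Fin 7 → ℂ)) with hgdef
  have hg : ∀ i : Fin 7, (g : (Fin 7 → ℂ) →ₗ[ℂ] (Fin 7 → ℂ)) (Pi.single i 1) =
      d i • (Pi.single i 1 : Fin 7 → ℂ) := by
    intro i
    funext j
    by_cases h : j = i
    · subst h
      simp [hgdef, LinearEquiv.piCongrRight_apply, LinearEquiv.smulOfNeZero_apply]
    · simp [hgdef, LinearEquiv.piCongrRight_apply, LinearEquiv.smulOfNeZero_apply,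
        Pi.single_eq_of_ne h]
  have hmap : ∀ i : Fin 7,
      ExteriorAlgebra.map (g : (Fin 7 → ℂ) →ₗ[ℂ] (Fin 7 → ℂ)) (e i) = d i • e i := by
    intro i
    rw [e, map_apply_ι, hg, map_smul]
  have key : ∀ a b c f : Fin 7,
      ExteriorAlgebra.map (g : (Fin 7 → ℂ) →ₗ[ℂ] (Fin 7 → ℂ)) (e a * e b * e c * e f) =
        (d a * d b * d c * d f) • (e a * e b * e c * e f) := by
    intro a b c f
    rw [map_mul, map_mul, map_mul, hmap, hmap, hmap, hmap]
    simp only [smul_mul_assoc, mul_smul_comm, smul_smul]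
    congr 1
    ring
  have hdv0 : d 0 = u := rfl
  have hdv1 : d 1 = u := rfl
  have hdv2 : d 2 = u⁻¹ := rfl
  have hdv3 : d 3 = u := rfl
  have hdv4 : d 4 = u := rfl
  have hdv5 : d 5 = u⁻¹ := rfl
  have hdv6 : d 6 = u⁻¹ := rfl
  rw [map_add, map_smul, ω₀, map_add, map_add, map_add, key, key, key, key, key, ω, ω₀]
  have s1 : d 0 * d 1 * d 2 * d 6 = 1 := by
    rw [hdv0, hdv1, hdv2, hdv6]
    field_simp
  have s2 : d 3 * d 4 * d 5 * d 6 = 1 := by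
    rw [hdv3, hdv4, hdv5, hdv6]
    field_simp
  have s3 : d 1 * d 2 * d 4 * d 5 = 1 := by
    rw [hdv1, hdv2, hdv4, hdv5]
    field_simp
  have s4 : d 0 * d 2 * d 3 * d 5 = 1 := by
    rw [hdv0, hdv2, hdv3, hdv5]
    field_simp
  have s5 : t • ((d 0 * d 1 * d 3 * d 4) • (e 0 * e 1 * e 3 * e 4)) = e 0 * e 1 * e 3 * e 4 := by
    rw [smul_smul]
    have h5 : t * (d 0 * d 1 * d 3 * d 4) = 1 := by
      rw [hdv0, hdv1, hdv3, hdv4]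
      have h44 : u * u * u * u = t⁻¹ := by rw [← hu]; ring
      rw [h44, mul_inv_cancel₀ ht]
    rw [h5, one_smul]
  rw [s1, s2, s3, s4, s5, one_smul, one_smul, one_smul, one_smul]

end
end
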